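/- Let $X_1,\ldots,X_n$ be i.i.d. random variables taking values in a measurable space $\mathcal{X}$, let $h:\mathcal{X}^m\to\mathbb{R}$ be a bounded measurable kernel of $m\geq 2$ variables with $n\geq m$, let $m_h=E\,h(X_1,\ldots,X_m)$ and $k=\lfloor n/m\rfloor$. Then for every $t>0$, the one-sided bound $P\{U_n(h)-m_h\geq t\}\leq \exp\left(-\frac{k t^2}{2\|h\|_\infty^2}\right)$ holds. -/

import Mathlib

open MeasureTheory ProbabilityTheory Real

/-- The U-statistic of order `m` with kernel `h` evaluated on the data `x`. -/
noncomputable def Ustat {𝒳 : Type*} {m n : ℕ} (h : (Fin m → 𝒳) → ℝ) (x : Fin n → 𝒳) : ℝ :=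
  (((n - m).factorial : ℝ) / (n.factorial : ℝ)) * ∑ ι : Fin m ↪ Fin n, h fun j => x (ι j)

/-! Hoeffding's decomposition: averaged over all permutations `σ` of the sample, `U_n` is the mean
of `W_σ = k⁻¹ ∑_{r<k} h(X_{σ(rm)}, …, X_{σ(rm+m-1)})`, whose `k = ⌊n/m⌋` blocks are disjoint.
Each `W_σ - m_h` is an average of `k` independent centred variables bounded by `‖h‖_∞`, hence
sub-Gaussian with variance proxy `‖h‖_∞² / k` by Hoeffding's lemma. By convexity of `exp`, a
convex combination of sub-Gaussian variables with a common proxy keeps that proxy, independent or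
not, so `U_n - m_h` is sub-Gaussian with proxy `‖h‖_∞² / k`, and the Chernoff bound concludes. -/

open scoped NNReal

theorem inv_card_mul_sum_sub {ι : Type*} {s : Finset ι} (hs : s.Nonempty) (a : ι → ℝ) (c : ℝ) :
    (s.card : ℝ)⁻¹ * ∑ i ∈ s, (a i - c) = (s.card : ℝ)⁻¹ * ∑ i ∈ s, a i - c := by
  have : (s.card : ℝ) ≠ 0 := by exact_mod_cast hs.card_pos.ne'
  rw [Finset.sum_sub_distrib, Finset.sum_const, nsmul_eq_mul]
  field_simp

theorem Equiv.Perm.sum_smul_embedding {α β : Type*} [Fintype α] [Fintype β] [DecidableEq α]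
    [DecidableEq β] (e : α ↪ β) (f : (α ↪ β) → ℝ) :
    ∑ σ : Equiv.Perm β, f (σ • e) =
      ((Fintype.card β - Fintype.card α).factorial : ℝ) * ∑ ι : α ↪ β, f ι := by
  have hconst : ∀ e' : α ↪ β, ∑ σ : Equiv.Perm β, f (σ • e') = ∑ σ : Equiv.Perm β, f (σ • e) := by
    intro e'
    obtain ⟨τ, rfl⟩ := Equiv.Perm.exists_smul_eq_embedding e e'
    simp_rw [smul_smul]
    exact Fintype.sum_equiv (Equiv.mulRight τ) _ _ fun _ => rfl
  have htotal : (Fintype.card (α ↪ β) : ℝ) * ∑ σ : Equiv.Perm β, f (σ • e) =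
      (Fintype.card β).factorial * ∑ ι : α ↪ β, f ι := by
    calc (Fintype.card (α ↪ β) : ℝ) * ∑ σ : Equiv.Perm β, f (σ • e)
        = ∑ e' : α ↪ β, ∑ σ : Equiv.Perm β, f (σ • e') := by
          simp [hconst, Finset.sum_const, Finset.card_univ]
      _ = ∑ σ : Equiv.Perm β, ∑ ι : α ↪ β, f ι := by
          rw [Finset.sum_comm]
          exact Finset.sum_congr rfl fun σ _ => Equiv.sum_comp (MulAction.toPerm σ) f
      _ = (Fintype.card β).factorial * ∑ ι : α ↪ β, f ι := by
          simp [Finset.sum_const, Finset.card_univ, Fintype.card_perm]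
  have hcard := Nat.factorial_mul_descFactorial (Fintype.card_le_of_embedding e)
  rw [Fintype.card_embedding_eq, ← hcard, Nat.cast_mul] at htotal
  have hpos : ((Fintype.card β).descFactorial (Fintype.card α) : ℝ) ≠ 0 := by
    exact_mod_cast (Nat.descFactorial_pos.2 (Fintype.card_le_of_embedding e)).ne'
  exact mul_left_cancel₀ hpos (by linear_combination htotal)

theorem ustat_eq_inv_factorial_mul_sum_perm {𝒳 : Type*} {m n : ℕ} (e : Fin m ↪ Fin n)
    (h : (Fin m → 𝒳) → ℝ) (x : Fin n → 𝒳) :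
    Ustat h x = (n.factorial : ℝ)⁻¹ * ∑ σ : Equiv.Perm (Fin n), h fun j => x (σ (e j)) := by
  have := Equiv.Perm.sum_smul_embedding e fun ι => h fun j => x (ι j)
  simp only [Function.Embedding.smul_apply, Equiv.Perm.smul_def, Fintype.card_fin] at this
  rw [this, Ustat]
  ring

theorem ustat_eq_inv_factorial_mul_sum_perm_blocks {𝒳 κ : Type*} [Fintype κ] [Nonempty κ]
    {m n : ℕ} (E : κ × Fin m ↪ Fin n) (h : (Fin m → 𝒳) → ℝ) (x : Fin n → 𝒳) :
    Ustat h x = (n.factorial : ℝ)⁻¹ * ∑ σ : Equiv.Perm (Fin n),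
      (Fintype.card κ : ℝ)⁻¹ * ∑ r, h fun j => x (σ (E (r, j))) := by
  have hn : (n.factorial : ℝ) ≠ 0 := by positivity
  have hκ : (Fintype.card κ : ℝ) ≠ 0 := by exact_mod_cast Fintype.card_ne_zero
  have hblock (r : κ) : ∑ σ : Equiv.Perm (Fin n), h (fun j => x (σ (E (r, j)))) =
      n.factorial * Ustat h x := by
    rw [ustat_eq_inv_factorial_mul_sum_perm ((Function.Embedding.sectR r (Fin m)).trans E)]
    field_simp
    rfl
  simp_rw [← Finset.mul_sum]
  rw [Finset.sum_comm, Finset.sum_congr rfl fun r _ => hblock r, Finset.sum_const,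
    Finset.card_univ, nsmul_eq_mul]
  field_simp

namespace ProbabilityTheory

variable {Ω : Type*} [MeasurableSpace Ω] {μ : Measure Ω}

theorem iIndepFun.precomp_curry {ι κ ι' 𝒳 : Type*} [MeasurableSpace 𝒳] {X : ι → Ω → 𝒳}
    (hX : ∀ i, Measurable (X i)) (hind : iIndepFun X μ) {φ : κ × ι' → ι}
    (hφ : Function.Injective φ) :
    iIndepFun (fun r ω j => X (φ (r, j)) ω) μ := by
  have := hind.isProbabilityMeasure
  have (p : κ × ι') : IsProbabilityMeasure (μ.map (X (φ p))) :=
    Measure.isProbabilityMeasure_map (hX _).aemeasurable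
  rw [iIndepFun_iff_map_fun_eq_infinitePi_map fun r => measurable_pi_lambda _ fun j => hX _]
  calc μ.map (fun ω r j => X (φ (r, j)) ω)
      = (μ.map fun ω p => X (φ p) ω).map (MeasurableEquiv.curry κ ι' 𝒳) := by
        rw [Measure.map_map (by fun_prop) (measurable_pi_lambda _ fun p => hX _)]
        rfl
    _ = Measure.infinitePi fun r => Measure.infinitePi fun j => μ.map (X (φ (r, j))) := by
        rw [(hind.precomp hφ).map_fun_eq_infinitePi_map fun p => hX _]
        exact Measure.infinitePi_map_curry fun r j => μ.map (X (φ (r, j)))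
    _ = Measure.infinitePi fun r => μ.map fun ω j => X (φ (r, j)) ω := by
        congr with r : 1
        exact ((hind.precomp (hφ.comp (Prod.mk_right_injective r))).map_fun_eq_infinitePi_map
          fun j => hX _).symm

theorem iIndepFun.integral_comp_eq_of_identDistrib {ι ι' 𝒳 : Type*} [MeasurableSpace 𝒳]
    {X : ι → Ω → 𝒳} (hX : ∀ i, Measurable (X i)) (hind : iIndepFun X μ)
    (hid : ∀ i j, IdentDistrib (X i) (X j) μ μ) {g : (ι' → 𝒳) → ℝ} (hg : Measurable g)
    {f f' : ι' → ι} (hf : Function.Injective f) (hf' : Function.Injective f') :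
    ∫ ω, g (fun j => X (f j) ω) ∂μ = ∫ ω, g (fun j => X (f' j) ω) ∂μ := by
  have hlaw : μ.map (fun ω j => X (f j) ω) = μ.map (fun ω j => X (f' j) ω) := by
    rw [(hind.precomp hf).map_fun_eq_infinitePi_map fun j => hX _,
      (hind.precomp hf').map_fun_eq_infinitePi_map fun j => hX _]
    congr with j : 1
    exact (hid (f j) (f' j)).map_eq
  rw [← integral_map (measurable_pi_lambda _ fun j => hX _).aemeasurable
      hg.aestronglyMeasurable, hlaw,
    integral_map (measurable_pi_lambda _ fun j => hX _).aemeasurable hg.aestronglyMeasurable]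

theorem hasSubgaussianMGF_sub_integral_of_abs_le [IsProbabilityMeasure μ] {X : Ω → ℝ}
    (hX : AEMeasurable X μ) {C : ℝ} (hC : ∀ᵐ ω ∂μ, |X ω| ≤ C) :
    HasSubgaussianMGF (fun ω => X ω - μ[X]) (‖C‖₊ ^ 2) μ := by
  have h := hasSubgaussianMGF_of_mem_Icc hX (a := -C) (b := C)
    (by filter_upwards [hC] with ω hω using abs_le.mp hω)
  convert h using 3
  ext
  simp [← two_mul]

theorem HasSubgaussianMGF.sum_mul_of_sum_eq_one {ι : Type*} {s : Finset ι} {Y : ι → Ω → ℝ}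
    {c : ℝ≥0} (hY : ∀ i ∈ s, HasSubgaussianMGF (Y i) c μ) {w : ι → ℝ}
    (hw₀ : ∀ i ∈ s, 0 ≤ w i) (hw₁ : ∑ i ∈ s, w i = 1) :
    HasSubgaussianMGF (fun ω => ∑ i ∈ s, w i * Y i ω) c μ := by
  have hjensen (t : ℝ) (ω : Ω) :
      exp (t * ∑ i ∈ s, w i * Y i ω) ≤ ∑ i ∈ s, w i * exp (t * Y i ω) := by
    have hsum : t * ∑ i ∈ s, w i * Y i ω = ∑ i ∈ s, w i • (t * Y i ω) := by
      rw [Finset.mul_sum]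
      exact Finset.sum_congr rfl fun i _ => by rw [smul_eq_mul]; ring
    rw [hsum]
    exact convexOn_exp.map_sum_le hw₀ hw₁ fun _ _ => Set.mem_univ _
  have hint (t : ℝ) : Integrable (fun ω => ∑ i ∈ s, w i * exp (t * Y i ω)) μ :=
    integrable_finsetSum _ fun i hi => ((hY i hi).integrable_exp_mul t).const_mul _
  have hmeas : AEMeasurable (fun ω => ∑ i ∈ s, w i * Y i ω) μ :=
    Finset.aemeasurable_fun_sum _ fun i hi => (hY i hi).aemeasurable.const_mul _
  have hint_exp (t : ℝ) : Integrable (fun ω => exp (t * ∑ i ∈ s, w i * Y i ω)) μ :=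
    (hint t).mono' (measurable_exp.comp_aemeasurable (hmeas.const_mul t)).aestronglyMeasurable
      (ae_of_all _ fun ω => by rw [Real.norm_of_nonneg (exp_pos _).le]; exact hjensen t ω)
  refine ⟨hint_exp, fun t => ?_⟩
  calc mgf (fun ω => ∑ i ∈ s, w i * Y i ω) μ t
      ≤ ∫ ω, ∑ i ∈ s, w i * exp (t * Y i ω) ∂μ :=
        integral_mono (hint_exp t) (hint t) (hjensen t)
    _ = ∑ i ∈ s, w i * mgf (Y i) μ t := by
        rw [integral_finsetSum _ fun i hi => ((hY i hi).integrable_exp_mul t).const_mul _]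
        simp_rw [integral_const_mul]
        rfl
    _ ≤ ∑ i ∈ s, w i * exp (c * t ^ 2 / 2) :=
        Finset.sum_le_sum fun i hi => mul_le_mul_of_nonneg_left ((hY i hi).mgf_le t) (hw₀ i hi)
    _ = exp (c * t ^ 2 / 2) := by rw [← Finset.sum_mul, hw₁, one_mul]

theorem iIndepFun.hasSubgaussianMGF_block_average {ι κ ι' 𝒳 : Type*} [Fintype κ] [Nonempty κ]
    [MeasurableSpace 𝒳] {X : ι → Ω → 𝒳} (hX : ∀ i, Measurable (X i)) (hind : iIndepFun X μ)
    {φ : κ × ι' → ι} (hφ : Function.Injective φ) {g : (ι' → 𝒳) → ℝ} (hg : Measurable g)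
    {C : ℝ} (hC : ∀ y, |g y| ≤ C) {m : ℝ}
    (hm : ∀ r, ∫ ω, g (fun j => X (φ (r, j)) ω) ∂μ = m) :
    HasSubgaussianMGF (fun ω => (Fintype.card κ : ℝ)⁻¹ * ∑ r, g (fun j => X (φ (r, j)) ω) - m)
      (‖C‖₊ ^ 2 / Fintype.card κ) μ := by
  have := hind.isProbabilityMeasure
  have hblock (r : κ) : Measurable fun ω => g fun j => X (φ (r, j)) ω :=
    hg.comp (measurable_pi_lambda _ fun j => hX _)
  have hcentered (r : κ) :
      HasSubgaussianMGF (fun ω => g (fun j => X (φ (r, j)) ω) - m) (‖C‖₊ ^ 2) μ := by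
    rw [← hm r]
    exact hasSubgaussianMGF_sub_integral_of_abs_le (hblock r).aemeasurable
      (ae_of_all _ fun ω => hC _)
  have hindep : iIndepFun (fun r ω => g (fun j => X (φ (r, j)) ω) - m) μ :=
    (hind.precomp_curry hX hφ).comp (fun _ y => g y - m) fun _ => hg.sub_const m
  have hsum := (HasSubgaussianMGF.sum_of_iIndepFun hindep (s := Finset.univ)
    fun r _ => hcentered r).const_mul (Fintype.card κ : ℝ)⁻¹
  convert hsum using 1
  · ext ω
    rw [← Finset.card_univ, inv_card_mul_sum_sub Finset.univ_nonempty]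
  · ext
    have : (Fintype.card κ : ℝ) ≠ 0 := by exact_mod_cast Fintype.card_ne_zero
    change _ = (Fintype.card κ : ℝ)⁻¹ ^ 2 * ((∑ _r : κ, ‖C‖₊ ^ 2 : ℝ≥0) : ℝ)
    simp only [NNReal.coe_div, NNReal.coe_pow, coe_nnnorm, norm_eq_abs, sq_abs,
      NNReal.coe_natCast, inv_pow, Finset.sum_const, Finset.card_univ, nsmul_eq_mul,
      NNReal.coe_mul]
    field_simp

end ProbabilityTheory

theorem ustat_hoeffding_one_sided
    {Ω : Type*} [MeasureSpace Ω] [IsProbabilityMeasure (ℙ : Measure Ω)]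
    {𝒳 : Type*} [MeasurableSpace 𝒳] {m n : ℕ} (hm : 2 ≤ m) (hmn : m ≤ n)
    (X : Fin n → Ω → 𝒳) (hXmeas : ∀ i, Measurable (X i))
    (hIndep : iIndepFun X ℙ)
    (hid : ∀ i j, IdentDistrib (X i) (X j) ℙ ℙ)
    (h : (Fin m → 𝒳) → ℝ) (hhmeas : Measurable h)
    (C : ℝ) (hC : ∀ x, |h x| ≤ C)
    (mh : ℝ) (hmh : mh = ∫ ω, h (fun j => X (Fin.castLE hmn j) ω) ∂ℙ)
    (t : ℝ) (ht : 0 < t) :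
    ℙ {ω | t ≤ Ustat h (fun i => X i ω) - mh} ≤
      ENNReal.ofReal (Real.exp (-(((n / m : ℕ) : ℝ) * t ^ 2) / (2 * C ^ 2))) := by
  set k := n / m
  have : Nonempty (Fin k) := ⟨⟨0, Nat.div_pos hmn (by omega)⟩⟩
  -- `E (r, j) = m * r + j`: the `k` disjoint blocks of length `m` in `Fin n`
  let E : Fin k × Fin m ↪ Fin n :=
    finProdFinEquiv.toEmbedding.trans (Fin.castLEEmb (Nat.div_mul_le_self n m))
  have hblock (σ : Equiv.Perm (Fin n)) : HasSubgaussianMGF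
      (fun ω => (k : ℝ)⁻¹ * ∑ r, h (fun j => X (σ (E (r, j))) ω) - mh) (‖C‖₊ ^ 2 / k) ℙ := by
    simpa using hIndep.hasSubgaussianMGF_block_average hXmeas (σ.injective.comp E.injective)
      hhmeas hC fun r => hmh ▸ hIndep.integral_comp_eq_of_identDistrib hXmeas hid hhmeas
        (σ.injective.comp E.injective |>.comp (Prod.mk_right_injective r))
        (Fin.castLE_injective hmn)
  have hcard : ((Finset.univ : Finset (Equiv.Perm (Fin n))).card : ℝ) = n.factorial := by
    simp [Fintype.card_perm]
  have hU : HasSubgaussianMGF (fun ω => Ustat h (fun i => X i ω) - mh) (‖C‖₊ ^ 2 / k) ℙ := by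
    refine (HasSubgaussianMGF.sum_mul_of_sum_eq_one (fun σ _ => hblock σ)
      (s := Finset.univ) (w := fun _ => (n.factorial : ℝ)⁻¹) (fun _ _ => by positivity)
      (by simp [Fintype.card_perm, Nat.factorial_ne_zero])).congr (ae_of_all _ fun ω => ?_)
    dsimp only
    rw [← Finset.mul_sum, ← hcard, inv_card_mul_sum_sub Finset.univ_nonempty, hcard,
      ustat_eq_inv_factorial_mul_sum_perm_blocks E, Fintype.card_fin]
  calc ℙ {ω | t ≤ Ustat h (fun i => X i ω) - mh}
      = ENNReal.ofReal ((ℙ : Measure Ω).real {ω | t ≤ Ustat h (fun i => X i ω) - mh}) :=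
        (ofReal_measureReal (measure_ne_top _ _)).symm
    _ ≤ ENNReal.ofReal (exp (-t ^ 2 / (2 * ↑(‖C‖₊ ^ 2 / (k : ℝ≥0))))) :=
        ENNReal.ofReal_le_ofReal (hU.measure_ge_le ht.le)
    _ = ENNReal.ofReal (exp (-((k : ℝ) * t ^ 2) / (2 * C ^ 2))) := by
        simp only [NNReal.coe_div, NNReal.coe_pow, coe_nnnorm, norm_eq_abs, sq_abs,
          NNReal.coe_natCast, ← mul_div_assoc, div_div_eq_mul_div]
        ring_nf
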